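/- arXiv:1710.05250 — 7 statements merged into one kernel-verified Lean document; each statement's English description precedes it below -/
import Mathlib

section
/- For every finite star-free graph Γ there exists a finite semigroup S such that the commuting graph of S is isomorphic to Γ. -/
/-- The commuting graph of a semigroup: vertices are the non-central
elements, two distinct vertices are adjacent iff they commute. -/
def CommutingGraph (S : Type*) [Semigroup S] :
    SimpleGraph {x : S // x ∉ Set.center S} where
  Adj a b := a ≠ b ∧ (a : S) * b = (b : S) * a
  symm := ⟨fun _ _ ⟨h, hc⟩ => ⟨h.symm, hc.symm⟩⟩
  loopless := ⟨fun _ ⟨h, _⟩ => h rfl⟩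

/-- A graph is star-free if no vertex is adjacent to every other vertex. -/
def SimpleGraph.IsStarFree {V : Type*} (G : SimpleGraph V) : Prop :=
  ∀ v : V, ¬ (∀ w : V, w ≠ v → G.Adj v w)

/-! Adjoin to the vertices a zero and all ordered pairs `(x, y)`, and let `x * y = (x, y)` when
the vertices `x, y` are distinct and non-adjacent, every other product being zero. Products of
three elements vanish, so this is a semigroup in which the zero and the pairs are central. Two
vertices commute iff they are equal or adjacent, so star-freeness says exactly that no vertex is
central, and the commuting graph is then the graph itself. -/

/-- Zero is `none`, `some (.inl a)` is the generator `a`, `some (.inr b)` is the element `b`;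
the product of generators `a, b` is `m a b` (`none` being zero), all other products are zero. -/
def PairSemigroup {A B : Type*} (_m : A → A → Option B) : Type _ := Option (A ⊕ B)

namespace PairSemigroup

variable {A B : Type*} (m : A → A → Option B)

def gen (a : A) : PairSemigroup m := some (Sum.inl a)

instance : Mul (PairSemigroup m) where
  mul
    | some (Sum.inl a), some (Sum.inl b) => (m a b).map Sum.inr
    | _, _ => none

instance [Fintype A] [Fintype B] : Fintype (PairSemigroup m) :=
  inferInstanceAs (Fintype (Option (A ⊕ B)))

variable {m}

theorem mul_ne_gen (x y : PairSemigroup m) (a : A) : x * y ≠ gen m a := by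
  rcases x with _ | a | b <;> rcases y with _ | c | d <;> try rintro ⟨⟩
  change (m a c).map Sum.inr ≠ some (Sum.inl _)
  cases m a c <;> simp

theorem mul_eq_none_left {x : PairSemigroup m} (hx : ∀ a, x ≠ gen m a) (y : PairSemigroup m) :
    x * y = none := by
  rcases x with _ | a | b
  · rfl
  · exact absurd rfl (hx a)
  · rfl

theorem mul_eq_none_right {y : PairSemigroup m} (hy : ∀ a, y ≠ gen m a) (x : PairSemigroup m) :
    x * y = none := by
  rcases y with _ | a | b
  · rcases x with _ | _ | _ <;> rfl
  · exact absurd rfl (hy a)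
  · rcases x with _ | _ | _ <;> rfl

instance : Semigroup (PairSemigroup m) where
  mul_assoc x y z := by
    rw [mul_eq_none_left (mul_ne_gen x y), mul_eq_none_right (mul_ne_gen y z)]

theorem mem_center_of_ne_gen {x : PairSemigroup m} (hx : ∀ a, x ≠ gen m a) :
    x ∈ Set.center (PairSemigroup m) :=
  Semigroup.mem_center_iff.2 fun y => by rw [mul_eq_none_left hx, mul_eq_none_right hx]

theorem gen_mul_comm_iff (a b : A) : gen m a * gen m b = gen m b * gen m a ↔ m a b = m b a :=
  (Option.map_injective Sum.inr_injective).eq_iff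

theorem gen_mem_center_iff (a : A) :
    gen m a ∈ Set.center (PairSemigroup m) ↔ ∀ b, m a b = m b a := by
  refine Semigroup.mem_center_iff.trans
    ⟨fun h b => ((gen_mul_comm_iff b a).1 (h _)).symm, fun h y => ?_⟩
  by_cases hy : ∃ b, y = gen m b
  · obtain ⟨b, rfl⟩ := hy
    exact (gen_mul_comm_iff b a).2 (h b).symm
  · push Not at hy
    rw [mul_eq_none_left hy, mul_eq_none_right hy]

theorem gen_injective : Function.Injective (gen m) :=
  fun _ _ h => Sum.inl_injective (Option.some_injective _ h)

theorem exists_gen_of_not_mem_center {x : PairSemigroup m}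
    (hx : x ∉ Set.center (PairSemigroup m)) : ∃ a, x = gen m a := by
  by_contra! h
  exact hx (mem_center_of_ne_gen h)

theorem nonempty_commutingGraph_iso (hm : ∀ a, ∃ b, m a b ≠ m b a) :
    Nonempty
      (CommutingGraph (PairSemigroup m) ≃g SimpleGraph.fromRel fun a b => m a b = m b a) := by
  have gen_not_mem_center (a : A) : gen m a ∉ Set.center (PairSemigroup m) := by
    simpa [gen_mem_center_iff] using hm a
  let f (a : A) : {x // x ∉ Set.center (PairSemigroup m)} := ⟨gen m a, gen_not_mem_center a⟩
  have hf : f.Bijective := by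
    refine ⟨fun a b h => gen_injective (congrArg Subtype.val h), fun ⟨x, hx⟩ => ?_⟩
    obtain ⟨a, rfl⟩ := exists_gen_of_not_mem_center hx
    exact ⟨a, rfl⟩
  refine ⟨RelIso.symm ⟨Equiv.ofBijective f hf, fun {a b} => ?_⟩⟩
  simp [CommutingGraph, f, gen_mul_comm_iff, gen_injective.eq_iff, eq_comm]

end PairSemigroup

namespace SimpleGraph

variable {V : Type*} (G : SimpleGraph V)

open Classical in
noncomputable def nonAdjPair (x y : V) : Option (V × V) :=
  if x = y ∨ G.Adj x y then none else some (x, y)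

variable {G}

theorem nonAdjPair_comm_iff {x y : V} :
    G.nonAdjPair x y = G.nonAdjPair y x ↔ x = y ∨ G.Adj x y := by
  have hsymm : (y = x ∨ G.Adj y x) ↔ (x = y ∨ G.Adj x y) := by rw [eq_comm, G.adj_comm]
  by_cases h : x = y ∨ G.Adj x y
  · simp [nonAdjPair, h, hsymm.2 h]
  · simp_all [nonAdjPair]

theorem fromRel_nonAdjPair_comm :
    fromRel (fun x y => G.nonAdjPair x y = G.nonAdjPair y x) = G := by
  ext x y
  rw [fromRel_adj, @eq_comm _ (G.nonAdjPair y x), or_self, nonAdjPair_comm_iff]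
  exact ⟨fun ⟨hne, h⟩ => h.resolve_left hne, fun h => ⟨G.ne_of_adj h, .inr h⟩⟩

theorem IsStarFree.exists_nonAdjPair_ne (hG : G.IsStarFree) (x : V) :
    ∃ y, G.nonAdjPair x y ≠ G.nonAdjPair y x := by
  obtain ⟨y, hyx, hxy⟩ : ∃ y, y ≠ x ∧ ¬G.Adj x y := by simpa using hG x
  exact ⟨y, fun h => (nonAdjPair_comm_iff.1 h).elim (fun h => hyx h.symm) hxy⟩

end SimpleGraph

theorem starFree_is_commuting_graph {V : Type} [Fintype V] (G : SimpleGraph V)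
    (hG : G.IsStarFree) :
    ∃ (S : Type) (inst : Semigroup S) (_ : Fintype S),
      Nonempty (@CommutingGraph S inst ≃g G) := by
  obtain ⟨e⟩ := PairSemigroup.nonempty_commutingGraph_iso hG.exists_nonAdjPair_ne
  rw [SimpleGraph.fromRel_nonAdjPair_comm] at e
  exact ⟨PairSemigroup G.nonAdjPair, inferInstance, inferInstance, ⟨e⟩⟩
end

section
/- In the semigroup S constructed from a star-free graph Γ = (V,E) by the relations v₁v₂v₃ = 0 for all vᵢ and uv = vu for (u,v) ∈ E, the center Z(S) consists of 0 together with all products vu of two generators. -/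
/-- The free semigroup with zero on `V`. -/
abbrev FreeSemigroupWithZero (V : Type*) := WithZero (FreeSemigroup V)

/-- The defining relations of the semigroup associated to a graph:
all products of three generators are `0`, and `uv = vu` for every edge. -/
def graphRel (V : Type*) (G : SimpleGraph V) :
    FreeSemigroupWithZero V → FreeSemigroupWithZero V → Prop := fun p q =>
  (∃ v₁ v₂ v₃ : V,
      p = ((FreeSemigroup.of v₁ * FreeSemigroup.of v₂ * FreeSemigroup.of v₃ :
        FreeSemigroup V) : FreeSemigroupWithZero V) ∧ q = 0) ∨
  (∃ u v : V, G.Adj u v ∧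
      p = ((FreeSemigroup.of u * FreeSemigroup.of v : FreeSemigroup V) :
        FreeSemigroupWithZero V) ∧
      q = ((FreeSemigroup.of v * FreeSemigroup.of u : FreeSemigroup V) :
        FreeSemigroupWithZero V))

/-- The congruence generated by the defining relations. -/
def graphCon (V : Type*) (G : SimpleGraph V) : Con (FreeSemigroupWithZero V) :=
  conGen (graphRel V G)

/-- The semigroup presented by `⟨v ∈ V | v₁v₂v₃ = 0, uv = vu ∀(u,v) ∈ E⟩`. -/
def GraphSemigroup (V : Type*) (G : SimpleGraph V) : Type _ :=
  (graphCon V G).Quotient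

instance (V : Type*) (G : SimpleGraph V) : Semigroup (GraphSemigroup V G) :=
  Con.semigroup _

/-- The canonical map onto the presented semigroup. -/
def gmk (V : Type*) (G : SimpleGraph V) :
    FreeSemigroupWithZero V → GraphSemigroup V G :=
  (graphCon V G).toQuotient

/-!
Since every product of three generators is `0`, each element of the semigroup is `0`, a
generator `a`, or a product `ab`, and a product `ab` annihilates everything from both sides, so
`0` and the elements `ab` are central. A generator `a` is not: star-freeness provides `w ≠ a`
not adjacent to `a`, and sending `a ↦ E₀₁`, `w ↦ E₁₂` and every other generator to `0` defines a
representation by strictly upper triangular `3 × 3` matrices (so triple products vanish) that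
respects the commutation relations, yet maps `aw` to `E₀₂` and `wa` to `0`.
-/

namespace WithZero

variable {α β : Type*} [Mul α] [MulZeroClass β]

def liftMulHom (f : α →ₙ* β) : WithZero α →ₙ* β where
  toFun := WithZero.recZeroCoe 0 f
  map_mul' := by
    intro x y
    induction x using WithZero.recZeroCoe <;> induction y using WithZero.recZeroCoe <;>
      simp [← WithZero.coe_mul]

@[simp]
theorem liftMulHom_zero (f : α →ₙ* β) : liftMulHom f 0 = 0 := rfl

@[simp]
theorem liftMulHom_coe (f : α →ₙ* β) (x : α) : liftMulHom f x = f x := rfl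

end WithZero

namespace GraphSemigroup

variable {V : Type*} {G : SimpleGraph V}

instance : Zero (GraphSemigroup V G) := ⟨gmk V G 0⟩

variable (G) in
def gen (v : V) : GraphSemigroup V G := gmk V G (FreeSemigroup.of v : FreeSemigroupWithZero V)

theorem gmk_surjective : Function.Surjective (gmk V G) :=
  Quotient.mk_surjective

theorem gmk_zero : gmk V G 0 = 0 := rfl

theorem gmk_mul (p q : FreeSemigroupWithZero V) : gmk V G (p * q) = gmk V G p * gmk V G q :=
  rfl

protected theorem zero_mul (x : GraphSemigroup V G) : 0 * x = 0 := by
  obtain ⟨p, rfl⟩ := gmk_surjective x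
  rw [← gmk_zero, ← gmk_mul, zero_mul]

protected theorem mul_zero (x : GraphSemigroup V G) : x * 0 = 0 := by
  obtain ⟨p, rfl⟩ := gmk_surjective x
  rw [← gmk_zero, ← gmk_mul, mul_zero]

theorem zero_mem_center : (0 : GraphSemigroup V G) ∈ Set.center (GraphSemigroup V G) :=
  Semigroup.mem_center_iff.2 fun x => by rw [GraphSemigroup.zero_mul, GraphSemigroup.mul_zero]

theorem gmk_of_mul_of (u v : V) :
    gmk V G ((FreeSemigroup.of u * FreeSemigroup.of v : FreeSemigroup V) :
      FreeSemigroupWithZero V) = gen G u * gen G v :=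
  rfl

theorem gen_mul_gen_mul_gen (a b c : V) : gen G a * gen G b * gen G c = 0 :=
  (Con.eq _).2 <| ConGen.Rel.of _ _ <| Or.inl ⟨a, b, c, rfl, rfl⟩

theorem eq_zero_or_gen_or_gen_mul_gen (x : GraphSemigroup V G) :
    x = 0 ∨ (∃ a, x = gen G a) ∨ ∃ a b, x = gen G a * gen G b := by
  obtain ⟨p, rfl⟩ := gmk_surjective x
  induction p using WithZero.recZeroCoe with
  | zero => exact Or.inl rfl
  | coe w =>
    induction w with
    | ih1 a => exact Or.inr (Or.inl ⟨a, rfl⟩)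
    | ih2 w₁ w₂ ih₁ ih₂ =>
      rw [WithZero.coe_mul, gmk_mul]
      rcases ih₁ with h₁ | ⟨a, h₁⟩ | ⟨a, b, h₁⟩ <;> rcases ih₂ with h₂ | ⟨c, h₂⟩ | ⟨c, d, h₂⟩ <;>
        rw [h₁, h₂] <;>
        first
        | exact Or.inr (Or.inr ⟨a, c, rfl⟩)
        | exact Or.inl (by simp only [← mul_assoc, gen_mul_gen_mul_gen, GraphSemigroup.zero_mul,
            GraphSemigroup.mul_zero])

theorem gen_mul_gen_mul (a b : V) (x : GraphSemigroup V G) : gen G a * gen G b * x = 0 := by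
  rcases eq_zero_or_gen_or_gen_mul_gen x with rfl | ⟨c, rfl⟩ | ⟨c, d, rfl⟩ <;>
    simp only [← mul_assoc, gen_mul_gen_mul_gen, GraphSemigroup.zero_mul, GraphSemigroup.mul_zero]

theorem mul_gen_mul_gen (x : GraphSemigroup V G) (a b : V) : x * (gen G a * gen G b) = 0 := by
  rcases eq_zero_or_gen_or_gen_mul_gen x with rfl | ⟨c, rfl⟩ | ⟨c, d, rfl⟩ <;>
    simp only [← mul_assoc, gen_mul_gen_mul_gen, GraphSemigroup.zero_mul]

theorem gen_mul_gen_mem_center (a b : V) : gen G a * gen G b ∈ Set.center (GraphSemigroup V G) :=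
  Semigroup.mem_center_iff.2 fun x => by rw [mul_gen_mul_gen, gen_mul_gen_mul]

theorem liftMulHom_eq_of_gmk_eq {β : Type*} [SemigroupWithZero β] (φ : V → β)
    (h_triple : ∀ a b c, φ a * φ b * φ c = 0)
    (h_comm : ∀ u v, G.Adj u v → φ u * φ v = φ v * φ u)
    {p q : FreeSemigroupWithZero V} (h : gmk V G p = gmk V G q) :
    WithZero.liftMulHom (FreeSemigroup.lift φ) p =
      WithZero.liftMulHom (FreeSemigroup.lift φ) q := by
  have : graphCon V G ≤ Con.ker (WithZero.liftMulHom (FreeSemigroup.lift φ)) := by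
    refine Con.conGen_le.2 ?_
    rintro _ _ (⟨a, b, c, rfl, rfl⟩ | ⟨u, v, huv, rfl, rfl⟩)
    · simp [h_triple]
    · simp [h_comm u v huv]
  exact this ((Con.eq _).1 h)

theorem adj_of_gen_mul_gen_comm {u w : V} (hne : u ≠ w)
    (h : gen G u * gen G w = gen G w * gen G u) : G.Adj u w := by
  classical
  by_contra hadj
  set φ : V → Matrix (Fin 3) (Fin 3) ℤ := fun x =>
    if x = u then Matrix.single 0 1 1 else if x = w then Matrix.single 1 2 1 else 0 with hφ
  have hφ_mem : ∀ x, φ x = 0 ∨ φ x = Matrix.single 0 1 1 ∨ φ x = Matrix.single 1 2 1 := by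
    intro x
    simp only [hφ]
    split_ifs <;> simp
  have h_triple : ∀ a b c, φ a * φ b * φ c = 0 := by
    intro a b c
    rcases hφ_mem a with ha | ha | ha <;> rcases hφ_mem b with hb | hb | hb <;>
      rcases hφ_mem c with hc | hc | hc <;>
      simp [ha, hb, hc, Matrix.single_mul_single_same, Matrix.single_mul_single_of_ne]
  have h_comm : ∀ a b, G.Adj a b → φ a * φ b = φ b * φ a := by
    intro a b hab
    have h_zero : φ a = 0 ∨ φ b = 0 := by
      by_cases ha : a = u ∨ a = w
      · have hb : b ≠ u ∧ b ≠ w := by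
          rcases ha with rfl | rfl <;> constructor <;> rintro rfl
          exacts [G.irrefl hab, hadj hab, hadj hab.symm, G.irrefl hab]
        simp [hφ, hb]
      · simp [hφ, not_or.1 ha]
    rcases h_zero with h0 | h0 <;> simp [h0]
  have hu : φ u = Matrix.single 0 1 1 := if_pos rfl
  have hw : φ w = Matrix.single 1 2 1 := by simp [hφ, hne.symm]
  have h_images := liftMulHom_eq_of_gmk_eq φ h_triple h_comm h
  simp only [map_mul, WithZero.liftMulHom_coe, FreeSemigroup.lift_of, hu, hw] at h_images
  simpa using congrFun₂ h_images 0 2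

theorem gen_notMem_center (hG : G.IsStarFree) (a : V) :
    gen G a ∉ Set.center (GraphSemigroup V G) := fun ha =>
  hG a fun w hw => adj_of_gen_mul_gen_comm hw.symm (Semigroup.mem_center_iff.1 ha (gen G w)).symm

end GraphSemigroup

theorem center_graphSemigroup_general {V : Type} (G : SimpleGraph V)
    (hG : G.IsStarFree) :
    Set.center (GraphSemigroup V G) =
      insert (gmk V G 0)
        {x | ∃ u v : V,
          x = gmk V G ((FreeSemigroup.of u * FreeSemigroup.of v :
            FreeSemigroup V) : FreeSemigroupWithZero V)} := by
  simp only [GraphSemigroup.gmk_zero, GraphSemigroup.gmk_of_mul_of]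
  ext x
  constructor
  · intro hx
    rcases GraphSemigroup.eq_zero_or_gen_or_gen_mul_gen x with rfl | ⟨a, rfl⟩ | ⟨a, b, rfl⟩
    · exact Set.mem_insert _ _
    · exact absurd hx (GraphSemigroup.gen_notMem_center hG a)
    · exact Set.mem_insert_of_mem _ ⟨a, b, rfl⟩
  · rintro (rfl | ⟨a, b, rfl⟩)
    · exact GraphSemigroup.zero_mem_center
    · exact GraphSemigroup.gen_mul_gen_mem_center a b

theorem center_graphSemigroup {V : Type} [Fintype V] (G : SimpleGraph V)
    (hG : G.IsStarFree) :
    Set.center (GraphSemigroup V G) =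
      insert (gmk V G 0)
        {x | ∃ u v : V,
          x = gmk V G ((FreeSemigroup.of u * FreeSemigroup.of v :
            FreeSemigroup V) : FreeSemigroupWithZero V)} :=
  center_graphSemigroup_general G hG
end

section
/- For every natural number n ≥ 1, the semigroup Sₙ = ⟨a, b | a^{n+1} = b² = 0, aba = 0, b a^i b = 0 for all i ≥ 1⟩ has exactly 3n + 2 elements, namely 0, b, a, a², ..., aⁿ, ab, a²b, ..., aⁿb, ba, ba², ..., baⁿ. -/
/-- The free semigroup with zero on the two generators `a = of false`, `b = of true`. -/
abbrev W2 := WithZero (FreeSemigroup Bool)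

/-- The generator `a`. -/
def ga : FreeSemigroup Bool := FreeSemigroup.of false

/-- The generator `b`. -/
def gb : FreeSemigroup Bool := FreeSemigroup.of true

/-- `fsPow x k = x^(k+1)` (positive powers in a semigroup). -/
def fsPow (x : FreeSemigroup Bool) : ℕ → FreeSemigroup Bool
  | 0 => x
  | k + 1 => fsPow x k * x

/-- `apow i` is `a^i` for `i ≥ 1` (junk value `a` at `i = 0`). -/
def apow (i : ℕ) : FreeSemigroup Bool := fsPow ga (i - 1)

/-- The defining relations of `Sₙ`: `a^(n+1) = b² = 0`, `aba = 0`, `b aⁱ b = 0` for `i ≥ 1`. -/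
def SnRel (n : ℕ) : W2 → W2 → Prop := fun p q =>
  (p = ((apow (n + 1) : FreeSemigroup Bool) : W2) ∧ q = 0) ∨
  (p = ((gb * gb : FreeSemigroup Bool) : W2) ∧ q = 0) ∨
  (p = ((ga * gb * ga : FreeSemigroup Bool) : W2) ∧ q = 0) ∨
  (∃ i : ℕ, 1 ≤ i ∧ p = ((gb * apow i * gb : FreeSemigroup Bool) : W2) ∧ q = 0)

/-- The congruence generated by the relations of `Sₙ`. -/
def SnCon (n : ℕ) : Con W2 := conGen (SnRel n)

/-- The semigroup `Sₙ = ⟨a, b | a^(n+1) = b² = 0, aba = baⁱb = 0 ∀ i ≥ 1⟩`. -/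
def Sn (n : ℕ) : Type := (SnCon n).Quotient

instance (n : ℕ) : Semigroup (Sn n) := Con.semigroup _

/-- The canonical projection onto `Sₙ`. -/
def smk (n : ℕ) : W2 → Sn n := (SnCon n).toQuotient

/-!
Every element of `Sₙ` is one of `0, b, aⁱ, aⁱb, baⁱ` (`1 ≤ i ≤ n`): this set contains the
generators and is closed under left multiplication by `a` and `b`. To separate these elements, call
a word reduced if it has at most one `b`, at most `n` letters `a`, and no subsequence `aba`. The
reduced words are closed under taking factors, so sending reduced words to themselves and all other
words to `0` is compatible with multiplication; it kills every relator, hence is constant on the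
classes of `Sₙ`, and it fixes the listed words, which are distinct.
-/

namespace FreeSemigroup

variable {α : Type*}

def toList (x : FreeSemigroup α) : List α := x.head :: x.tail

@[simp] theorem toList_of (a : α) : (of a).toList = [a] := rfl

@[simp] theorem toList_mul (x y : FreeSemigroup α) : (x * y).toList = x.toList ++ y.toList := rfl

theorem toList_injective : Function.Injective (toList : FreeSemigroup α → List α) := by
  rintro ⟨a, l⟩ ⟨a', l'⟩ h
  cases h
  rfl

end FreeSemigroup

namespace WithZero

variable {S : Type*} (P : S → Prop) [DecidablePred P]

def reduce : WithZero S → WithZero S :=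
  WithZero.recZeroCoe 0 fun s => if P s then s else 0

@[simp] theorem reduce_zero : reduce P 0 = 0 := rfl

theorem reduce_coe (s : S) : reduce P s = if P s then (s : WithZero S) else 0 := rfl

theorem reduce_mul [Mul S] (hP : ∀ x y, P (x * y) → P x ∧ P y) (x y : WithZero S) :
    reduce P (x * y) = reduce P (reduce P x * reduce P y) := by
  induction x using WithZero.recZeroCoe with
  | zero => simp
  | coe s =>
    induction y using WithZero.recZeroCoe with
    | zero => simp
    | coe t =>
      by_cases hst : P (s * t)
      · simp [← coe_mul, reduce_coe, hst, (hP s t hst).1, (hP s t hst).2]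
      · by_cases hs : P s <;> by_cases ht : P t <;> simp [← coe_mul, reduce_coe, hst, hs, ht]

end WithZero

theorem Con.apply_eq_of_conGen {M N : Type*} [Mul M] {r : M → M → Prop} (f : M → N)
    (hf : ∀ {x x' y y'}, f x = f x' → f y = f y' → f (x * y) = f (x' * y'))
    (hr : ∀ x y, r x y → f x = f y) {x y : M} (h : conGen r x y) : f x = f y := by
  induction h with
  | of x y h => exact hr x y h
  | refl => rfl
  | symm _ ih => exact ih.symm
  | trans _ _ ih₁ ih₂ => exact ih₁.trans ih₂
  | mul _ _ ih₁ ih₂ => exact hf ih₁ ih₂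

theorem toList_fsPow_ga (k : ℕ) : (fsPow ga k).toList = List.replicate (k + 1) false := by
  induction k with
  | zero => rfl
  | succ k ih => rw [fsPow, FreeSemigroup.toList_mul, ih, List.replicate_succ' (n := k + 1)]; rfl

theorem toList_apow {i : ℕ} (hi : 1 ≤ i) : (apow i).toList = List.replicate i false := by
  rw [apow, toList_fsPow_ga, Nat.sub_add_cancel hi]

theorem apow_add {i j : ℕ} (hi : 1 ≤ i) (hj : 1 ≤ j) : apow i * apow j = apow (i + j) :=
  FreeSemigroup.toList_injective <| by
    rw [FreeSemigroup.toList_mul, toList_apow hi, toList_apow hj, toList_apow (by omega),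
      List.replicate_add]

namespace Sn

variable {n : ℕ}

instance : SemigroupWithZero (Sn n) where
  zero := smk n 0
  zero_mul x := Con.induction_on x fun p => congrArg (smk n) (zero_mul p)
  mul_zero x := Con.induction_on x fun p => congrArg (smk n) (mul_zero p)

theorem smk_coe_mul (u v : FreeSemigroup Bool) :
    smk n ((u * v : FreeSemigroup Bool) : W2) = smk n (u : W2) * smk n (v : W2) := rfl

theorem smk_eq_zero_of_rel {p : W2} (h : SnRel n p 0) : smk n p = 0 :=
  (Con.eq _).2 (ConGen.Rel.of _ _ h)

def a : Sn n := smk n (ga : W2)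

def b : Sn n := smk n (gb : W2)

def aPow (i : ℕ) : Sn n := smk n (apow i : W2)

theorem aPow_one : (aPow 1 : Sn n) = a := rfl

theorem aPow_mul_aPow {i j : ℕ} (hi : 1 ≤ i) (hj : 1 ≤ j) :
    (aPow i * aPow j : Sn n) = aPow (i + j) := by
  rw [aPow, aPow, aPow, ← smk_coe_mul, apow_add hi hj]

theorem aPow_eq_zero {k : ℕ} (hk : n < k) : (aPow k : Sn n) = 0 := by
  have h : (aPow (n + 1) : Sn n) = 0 := smk_eq_zero_of_rel (Or.inl ⟨rfl, rfl⟩)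
  obtain rfl | hk := eq_or_lt_of_le (Nat.succ_le_of_lt hk)
  · exact h
  · rw [← Nat.add_sub_cancel' hk.le, ← aPow_mul_aPow (by omega) (by omega), h, zero_mul]

theorem b_mul_b : (b * b : Sn n) = 0 :=
  smk_eq_zero_of_rel (Or.inr (Or.inl ⟨rfl, rfl⟩))

theorem a_mul_b_mul_a : (a * b * a : Sn n) = 0 :=
  smk_eq_zero_of_rel (Or.inr (Or.inr (Or.inl ⟨rfl, rfl⟩)))

theorem b_mul_aPow_mul_b {i : ℕ} (hi : 1 ≤ i) : (b * aPow i * b : Sn n) = 0 :=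
  smk_eq_zero_of_rel (Or.inr (Or.inr (Or.inr ⟨i, hi, rfl, rfl⟩)))

theorem aPow_mul_eq_zero {x : Sn n} (hx : a * x = 0) {i : ℕ} (hi : 1 ≤ i) : aPow i * x = 0 := by
  induction i, hi using Nat.le_induction with
  | base => exact hx
  | succ i hi ih => rw [← aPow_mul_aPow hi le_rfl, mul_assoc, aPow_one, hx, mul_zero]

theorem mul_aPow_eq_zero {x : Sn n} (hx : x * a = 0) {i : ℕ} (hi : 1 ≤ i) : x * aPow i = 0 := by
  induction i, hi using Nat.le_induction with
  | base => exact hx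
  | succ i hi ih => rw [← aPow_mul_aPow hi le_rfl, ← mul_assoc, ih, zero_mul]

theorem aPow_mul_b_mul_aPow {i j : ℕ} (hi : 1 ≤ i) (hj : 1 ≤ j) :
    (aPow i * b * aPow j : Sn n) = 0 := by
  refine mul_aPow_eq_zero ?_ hj
  rw [mul_assoc]
  exact aPow_mul_eq_zero (by rw [← mul_assoc, a_mul_b_mul_a]) hi

def normalForms (n : ℕ) : Set (Sn n) :=
  {0, b} ∪ {x | ∃ i, 1 ≤ i ∧ i ≤ n ∧ x = aPow i} ∪ {x | ∃ i, 1 ≤ i ∧ i ≤ n ∧ x = aPow i * b} ∪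
    {x | ∃ i, 1 ≤ i ∧ i ≤ n ∧ x = b * aPow i}

theorem zero_mem_normalForms : (0 : Sn n) ∈ normalForms n := by simp [normalForms]

theorem b_mem_normalForms : (b : Sn n) ∈ normalForms n := by simp [normalForms]

theorem aPow_mem_normalForms {i : ℕ} (hi : 1 ≤ i) : (aPow i : Sn n) ∈ normalForms n := by
  by_cases hin : i ≤ n
  · exact Or.inl (Or.inl (Or.inr ⟨i, hi, hin, rfl⟩))
  · exact aPow_eq_zero (n := n) (not_le.1 hin) ▸ zero_mem_normalForms

theorem aPow_mul_b_mem_normalForms {i : ℕ} (hi : 1 ≤ i) : (aPow i * b : Sn n) ∈ normalForms n := by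
  by_cases hin : i ≤ n
  · exact Or.inl (Or.inr ⟨i, hi, hin, rfl⟩)
  · rw [aPow_eq_zero (not_le.1 hin), zero_mul]
    exact zero_mem_normalForms

theorem b_mul_aPow_mem_normalForms {i : ℕ} (hi : 1 ≤ i) : (b * aPow i : Sn n) ∈ normalForms n := by
  by_cases hin : i ≤ n
  · exact Or.inr ⟨i, hi, hin, rfl⟩
  · rw [aPow_eq_zero (not_le.1 hin), mul_zero]
    exact zero_mem_normalForms

theorem a_mul_mem_normalForms {x : Sn n} (hx : x ∈ normalForms n) : a * x ∈ normalForms n := by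
  rcases hx with (((rfl | rfl) | ⟨i, hi, -, rfl⟩) | ⟨i, hi, -, rfl⟩) | ⟨i, hi, -, rfl⟩
  · rw [mul_zero]; exact zero_mem_normalForms
  · exact aPow_mul_b_mem_normalForms le_rfl
  · rw [← aPow_one, aPow_mul_aPow le_rfl hi]
    exact aPow_mem_normalForms (by omega)
  · rw [← mul_assoc, ← aPow_one, aPow_mul_aPow le_rfl hi]
    exact aPow_mul_b_mem_normalForms (by omega)
  · rw [← mul_assoc, ← aPow_one, aPow_mul_b_mul_aPow le_rfl hi]
    exact zero_mem_normalForms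

theorem b_mul_mem_normalForms {x : Sn n} (hx : x ∈ normalForms n) : b * x ∈ normalForms n := by
  rcases hx with (((rfl | rfl) | ⟨i, hi, -, rfl⟩) | ⟨i, hi, -, rfl⟩) | ⟨i, hi, -, rfl⟩
  · rw [mul_zero]; exact zero_mem_normalForms
  · rw [b_mul_b]; exact zero_mem_normalForms
  · exact b_mul_aPow_mem_normalForms hi
  · rw [← mul_assoc, b_mul_aPow_mul_b hi]; exact zero_mem_normalForms
  · rw [← mul_assoc, b_mul_b, zero_mul]; exact zero_mem_normalForms

theorem mem_normalForms (x : Sn n) : x ∈ normalForms n := by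
  induction x using Con.induction_on with | H p =>
  induction p using WithZero.recZeroCoe with
  | zero => exact zero_mem_normalForms
  | coe w =>
    induction w using FreeSemigroup.recOnMul with
    | ih1 c =>
      cases c with
      | false => exact aPow_mem_normalForms le_rfl
      | true => exact b_mem_normalForms
    | ih2 c w _ hw =>
      cases c with
      | false => exact a_mul_mem_normalForms hw
      | true => exact b_mul_mem_normalForms hw

def IsReduced (n : ℕ) (w : FreeSemigroup Bool) : Prop :=
  w.toList.count true ≤ 1 ∧ w.toList.count false ≤ n ∧ ¬ [false, true, false].Sublist w.toList

instance : DecidablePred (IsReduced n) := fun _ => inferInstanceAs (Decidable (_ ∧ _ ∧ _))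

theorem IsReduced.of_mul {x y : FreeSemigroup Bool} (h : IsReduced n (x * y)) :
    IsReduced n x ∧ IsReduced n y := by
  obtain ⟨hb, ha, hs⟩ := h
  simp only [FreeSemigroup.toList_mul, List.count_append] at hb ha hs
  exact ⟨⟨by omega, by omega, fun h => hs (h.trans (List.sublist_append_left _ _))⟩,
    ⟨by omega, by omega, fun h => hs (h.trans (List.sublist_append_right _ _))⟩⟩

theorem reduce_eq_of_rel {p q : W2} (h : SnRel n p q) :
    WithZero.reduce (IsReduced n) p = WithZero.reduce (IsReduced n) q := by
  rcases h with ⟨rfl, rfl⟩ | ⟨rfl, rfl⟩ | ⟨rfl, rfl⟩ | ⟨i, hi, rfl, rfl⟩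
  · rw [WithZero.reduce_coe, if_neg fun h => by simpa [toList_apow] using h.2.1]; rfl
  · rw [WithZero.reduce_coe, if_neg fun h => absurd h.1 (by decide)]; rfl
  · rw [WithZero.reduce_coe, if_neg fun h => h.2.2 (List.Sublist.refl _)]; rfl
  · rw [WithZero.reduce_coe, if_neg fun h => by simpa [toList_apow hi, gb] using h.1]; rfl

theorem reduce_eq_of_smk_eq {x y : W2} (h : smk n x = smk n y) :
    WithZero.reduce (IsReduced n) x = WithZero.reduce (IsReduced n) y := by
  refine Con.apply_eq_of_conGen _ (fun hx hy => ?_) (fun p q h => ?_) ((Con.eq _).1 h)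
  · rw [WithZero.reduce_mul _ (fun _ _ => IsReduced.of_mul), hx, hy,
      ← WithZero.reduce_mul _ (fun _ _ => IsReduced.of_mul)]
  · exact reduce_eq_of_rel h

def normalWord : Bool ⊕ Fin n ⊕ Fin n ⊕ Fin n → W2
  | .inl false => 0
  | .inl true => (gb : W2)
  | .inr (.inl i) => (apow (i + 1) : W2)
  | .inr (.inr (.inl i)) => ((apow (i + 1) * gb : FreeSemigroup Bool) : W2)
  | .inr (.inr (.inr i)) => ((gb * apow (i + 1) : FreeSemigroup Bool) : W2)

theorem reduce_normalWord (d : Bool ⊕ Fin n ⊕ Fin n ⊕ Fin n) :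
    WithZero.reduce (IsReduced n) (normalWord d) = normalWord d := by
  rcases d with (_ | _) | i | i | i
  · rfl
  all_goals
    rw [normalWord, WithZero.reduce_coe, if_pos]
    simp [IsReduced, toList_apow, gb, List.count_replicate, List.sublist_cons_iff,
      List.sublist_replicate_iff, List.eq_replicate_iff]
  -- left: `aba` is not a subsequence of `aⁱb`; reversal turns this into the case of `baⁱ`
  exact fun h => by
    simpa [List.sublist_cons_iff, List.sublist_replicate_iff, List.eq_replicate_iff] using h.reverse

theorem normalWord_injective : Function.Injective (normalWord (n := n)) := by
  rintro ((_ | _) | i | i | i) ((_ | _) | j | j | j) h <;>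
    simp only [normalWord, WithZero.coe_inj, ← FreeSemigroup.toList_injective.eq_iff,
      WithZero.zero_ne_coe, WithZero.coe_ne_zero, FreeSemigroup.toList_mul,
      toList_apow (Nat.le_add_left 1 _)] at h ⊢ <;>
    simp_all [gb, List.replicate_succ, Fin.ext_iff, List.replicate_eq_append_iff,
      List.append_eq_replicate_iff]

def normalForm (d : Bool ⊕ Fin n ⊕ Fin n ⊕ Fin n) : Sn n := smk n (normalWord d)

theorem normalForm_injective : Function.Injective (normalForm (n := n)) := fun d d' h => by
  have := reduce_eq_of_smk_eq h
  rwa [reduce_normalWord, reduce_normalWord, normalWord_injective.eq_iff] at this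

theorem normalForm_surjective : Function.Surjective (normalForm (n := n)) := by
  intro x
  have hfin : ∀ i, 1 ≤ i → i ≤ n → ∃ j : Fin n, (j : ℕ) + 1 = i := fun i h1 h2 =>
    ⟨⟨i - 1, by omega⟩, Nat.sub_add_cancel h1⟩
  rcases mem_normalForms x with (((rfl | rfl) | ⟨i, hi, hin, rfl⟩) | ⟨i, hi, hin, rfl⟩) |
      ⟨i, hi, hin, rfl⟩
  · exact ⟨.inl false, rfl⟩
  · exact ⟨.inl true, rfl⟩
  all_goals obtain ⟨j, rfl⟩ := hfin i hi hin
  · exact ⟨.inr (.inl j), rfl⟩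
  · exact ⟨.inr (.inr (.inl j)), rfl⟩
  · exact ⟨.inr (.inr (.inr j)), rfl⟩

theorem normalForm_bijective : Function.Bijective (normalForm (n := n)) :=
  ⟨normalForm_injective, normalForm_surjective⟩

theorem card_eq : Nat.card (Sn n) = 3 * n + 2 := by
  rw [← Nat.card_congr (Equiv.ofBijective _ normalForm_bijective)]
  simp only [Nat.card_eq_fintype_card, Fintype.card_sum, Fintype.card_bool, Fintype.card_fin]
  ring

end Sn

theorem Sn_card_and_elements_general (n : ℕ) :
    Nat.card (Sn n) = 3 * n + 2 ∧
    (Set.univ : Set (Sn n)) =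
      {smk n 0, smk n ((gb : FreeSemigroup Bool) : W2)} ∪
      {x | ∃ i : ℕ, 1 ≤ i ∧ i ≤ n ∧ x = smk n ((apow i : FreeSemigroup Bool) : W2)} ∪
      {x | ∃ i : ℕ, 1 ≤ i ∧ i ≤ n ∧
        x = smk n ((apow i * gb : FreeSemigroup Bool) : W2)} ∪
      {x | ∃ i : ℕ, 1 ≤ i ∧ i ≤ n ∧
        x = smk n ((gb * apow i : FreeSemigroup Bool) : W2)} :=
  ⟨Sn.card_eq, (Set.eq_univ_of_forall Sn.mem_normalForms).symm⟩

theorem Sn_card_and_elements (n : ℕ) (hn : 1 ≤ n) :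
    Nat.card (Sn n) = 3 * n + 2 ∧
    (Set.univ : Set (Sn n)) =
      {smk n 0, smk n ((gb : FreeSemigroup Bool) : W2)} ∪
      {x | ∃ i : ℕ, 1 ≤ i ∧ i ≤ n ∧ x = smk n ((apow i : FreeSemigroup Bool) : W2)} ∪
      {x | ∃ i : ℕ, 1 ≤ i ∧ i ≤ n ∧
        x = smk n ((apow i * gb : FreeSemigroup Bool) : W2)} ∪
      {x | ∃ i : ℕ, 1 ≤ i ∧ i ≤ n ∧
        x = smk n ((gb * apow i : FreeSemigroup Bool) : W2)} :=
  Sn_card_and_elements_general n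
end

section
/- For semigroups S and T with zero, the clique number of the commuting graph of the null union S • T equals ω(Γ(S)) + ω(Γ(T)). -/
/-- The null union `S • T` of two semigroups with zero: the zeros are
identified and all cross products are `0`.  It is realized as the
subsemigroup `{(s, t) | s = 0 ∨ t = 0}` of `S × T`, where a nonzero
`s ∈ S` corresponds to `(s, 0)`, a nonzero `t ∈ T` to `(0, t)`, and the
common zero to `(0, 0)`. -/
def NullUnion (S T : Type*) [MulZeroClass S] [MulZeroClass T] : Type _ :=
  {p : S × T // p.1 = 0 ∨ p.2 = 0}

instance (S T : Type*) [MulZeroClass S] [MulZeroClass T] : Mul (NullUnion S T) :=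
  ⟨fun x y => ⟨(x.1.1 * y.1.1, x.1.2 * y.1.2), by
    rcases x.2 with h | h
    · exact Or.inl (by rw [h, zero_mul])
    · exact Or.inr (by rw [h, zero_mul])⟩⟩

instance (S T : Type*) [MulZeroClass S] [MulZeroClass T] : Zero (NullUnion S T) :=
  ⟨⟨(0, 0), Or.inl rfl⟩⟩

instance (S T : Type*) [SemigroupWithZero S] [SemigroupWithZero T] :
    Semigroup (NullUnion S T) where
  mul_assoc a b c := Subtype.ext (Prod.ext (mul_assoc _ _ _) (mul_assoc _ _ _))

namespace SimpleGraph

variable {V W : Type*}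

@[simps]
protected def join (G : SimpleGraph V) (H : SimpleGraph W) : SimpleGraph (V ⊕ W) where
  Adj
    | .inl u, .inl v => G.Adj u v
    | .inr u, .inr v => H.Adj u v
    | .inl _, .inr _ | .inr _, .inl _ => True
  symm.symm
    | .inl _, .inl _ => G.adj_symm
    | .inr _, .inr _ => H.adj_symm
    | .inl _, .inr _ | .inr _, .inl _ => id

variable {G : SimpleGraph V} {H : SimpleGraph W}

lemma isClique_join_disjSum {s : Finset V} {t : Finset W} :
    (G.join H).IsClique (s.disjSum t : Set (V ⊕ W)) ↔ G.IsClique s ∧ H.IsClique t := by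
  refine ⟨fun h => ⟨?_, ?_⟩, fun ⟨hs, ht⟩ => ?_⟩
  · intro u hu v hv huv
    exact h (Finset.inl_mem_disjSum.2 hu) (Finset.inl_mem_disjSum.2 hv)
      (Sum.inl_injective.ne huv)
  · intro u hu v hv huv
    exact h (Finset.inr_mem_disjSum.2 hu) (Finset.inr_mem_disjSum.2 hv)
      (Sum.inr_injective.ne huv)
  · rintro (u | u) hu (v | v) hv huv
    · exact hs (Finset.inl_mem_disjSum.1 hu) (Finset.inl_mem_disjSum.1 hv) (ne_of_apply_ne _ huv)
    · trivial
    · trivial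
    · exact ht (Finset.inr_mem_disjSum.1 hu) (Finset.inr_mem_disjSum.1 hv) (ne_of_apply_ne _ huv)

lemma cliqueNum_join [Finite V] [Finite W] :
    (G.join H).cliqueNum = G.cliqueNum + H.cliqueNum := by
  refine le_antisymm ?_ ?_
  · obtain ⟨u, hu⟩ := (G.join H).exists_isNClique_cliqueNum
    rw [← Finset.toLeft_disjSum_toRight (u := u)] at hu
    obtain ⟨hs, ht⟩ := isClique_join_disjSum.1 hu.isClique
    rw [← hu.card_eq, Finset.card_disjSum]
    exact add_le_add hs.card_le_cliqueNum ht.card_le_cliqueNum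
  · obtain ⟨s, hs⟩ := G.exists_isNClique_cliqueNum
    obtain ⟨t, ht⟩ := H.exists_isNClique_cliqueNum
    rw [← hs.card_eq, ← ht.card_eq, ← Finset.card_disjSum]
    exact (isClique_join_disjSum.2 ⟨hs.isClique, ht.isClique⟩).card_le_cliqueNum

lemma Copy.cliqueNum_le [Finite W] (f : Copy G H) : G.cliqueNum ≤ H.cliqueNum := by
  obtain ⟨s, hs⟩ := G.exists_isNClique_cliqueNum
  have hclique : H.IsClique (s.map f.toEmbedding : Set W) := by
    simp only [Finset.coe_map]
    rintro _ ⟨u, hu, rfl⟩ _ ⟨v, hv, rfl⟩ huv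
    exact f.toHom.map_adj (hs.isClique hu hv (ne_of_apply_ne _ huv))
  rw [← hs.card_eq, ← Finset.card_map f.toEmbedding]
  exact hclique.card_le_cliqueNum

lemma Iso.cliqueNum_eq [Finite V] [Finite W] (e : G ≃g H) : G.cliqueNum = H.cliqueNum :=
  le_antisymm e.toCopy.cliqueNum_le e.symm.toCopy.cliqueNum_le

end SimpleGraph

namespace NullUnion

variable {S T : Type*} [SemigroupWithZero S] [SemigroupWithZero T]

lemma commute_iff {x y : NullUnion S T} :
    Commute x y ↔ Commute x.1.1 y.1.1 ∧ Commute x.1.2 y.1.2 :=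
  Subtype.ext_iff.trans Prod.ext_iff

lemma mem_center_iff {x : NullUnion S T} :
    x ∈ Set.center (NullUnion S T) ↔ x.1.1 ∈ Set.center S ∧ x.1.2 ∈ Set.center T := by
  simp only [Semigroup.mem_center_iff]
  refine ⟨fun h => ⟨fun s => ?_, fun t => ?_⟩,
    fun ⟨hS, hT⟩ y => commute_iff.2 ⟨hS _, hT _⟩⟩
  · exact (commute_iff.1 (h ⟨(s, 0), .inr rfl⟩)).1
  · exact (commute_iff.1 (h ⟨(0, t), .inl rfl⟩)).2

def ofSum :
    {s : S // s ∉ Set.center S} ⊕ {t : T // t ∉ Set.center T} →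
      {x : NullUnion S T // x ∉ Set.center (NullUnion S T)}
  | .inl s => ⟨⟨(s, 0), .inr rfl⟩, fun h => s.2 (mem_center_iff.1 h).1⟩
  | .inr t => ⟨⟨(0, t), .inl rfl⟩, fun h => t.2 (mem_center_iff.1 h).2⟩

lemma ofSum_injective : Function.Injective (ofSum (S := S) (T := T)) := by
  rintro (s | t) (s' | t') h <;>
    obtain ⟨h₁, h₂⟩ := Prod.ext_iff.1 (congrArg (·.1.1) h) <;>
    dsimp only [ofSum] at h₁ h₂
  · rw [Subtype.ext h₁]
  · exact absurd (h₁ ▸ Set.zero_mem_center) s.2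
  · exact absurd (h₁ ▸ Set.zero_mem_center) s'.2
  · rw [Subtype.ext h₂]

lemma ofSum_surjective : Function.Surjective (ofSum (S := S) (T := T)) := by
  rintro ⟨x, hx⟩
  rcases x.2 with hs | ht
  · have ht : x.1.2 ∉ Set.center T := fun ht => hx (mem_center_iff.2 ⟨by simp [hs], ht⟩)
    exact ⟨.inr ⟨x.1.2, ht⟩, Subtype.ext (Subtype.ext (Prod.ext hs.symm rfl))⟩
  · have hs : x.1.1 ∉ Set.center S := fun hs => hx (mem_center_iff.2 ⟨hs, by simp [ht]⟩)
    exact ⟨.inl ⟨x.1.1, hs⟩, Subtype.ext (Subtype.ext (Prod.ext rfl ht.symm))⟩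

noncomputable def commutingGraphIso :
    (CommutingGraph S).join (CommutingGraph T) ≃g CommutingGraph (NullUnion S T) where
  toEquiv := .ofBijective ofSum ⟨ofSum_injective, ofSum_surjective⟩
  map_rel_iff' {a b} := by
    change ofSum a ≠ ofSum b ∧ Commute (ofSum a).1 (ofSum b).1 ↔ _
    rw [ofSum_injective.ne_iff, commute_iff]
    rcases a with s | t <;> rcases b with s' | t' <;>
      simp [ofSum, CommutingGraph, Commute, SemiconjBy]

end NullUnion

theorem nullUnion_cliqueNum (S T : Type*) [SemigroupWithZero S]
    [SemigroupWithZero T] [Finite S] [Finite T] :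
    (CommutingGraph (NullUnion S T)).cliqueNum =
      (CommutingGraph S).cliqueNum + (CommutingGraph T).cliqueNum := by
  have : Finite (NullUnion S T) := Subtype.finite
  rw [← NullUnion.commutingGraphIso.cliqueNum_eq, SimpleGraph.cliqueNum_join]
end

section
/- Let S be a semigroup generated by d elements that has an ideal I not contained in the center Z(S) such that IS ⊆ Z(S) and SI ⊆ Z(S). If the commuting graph Γ(S) is connected, then its diameter is at most d + 2. -/
theorem Finset.card_le_of_forall_le_add {s : Finset ℕ} {k : ℕ}
    (h : ∀ i ∈ s, ∀ j ∈ s, j ≤ i + k) : s.card ≤ k + 1 := by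
  rcases s.eq_empty_or_nonempty with rfl | hs
  · simp
  have hsub : s ⊆ Finset.Icc (s.min' hs) (s.min' hs + k) := fun j hj =>
    Finset.mem_Icc.mpr ⟨s.min'_le j hj, h _ (s.min'_mem hs) j hj⟩
  have hcard := Finset.card_le_card hsub
  rw [Nat.card_Icc] at hcard
  omega

namespace SimpleGraph

variable {V : Type*} {G : SimpleGraph V}

theorem Walk.dist_getVert_of_length_eq_dist {u v : V} (p : G.Walk u v)
    (hp : p.length = G.dist u v) {i : ℕ} (hi : i ≤ p.length) :
    G.dist u (p.getVert i) = i := by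
  rw [← length_eq_dist_of_subwalk hp (p.isSubwalk_take i), Walk.take_length]
  exact min_eq_left hi

theorem Connected.dist_le_card_add (hG : G.Connected) {P : Set V} {k : ℕ}
    (hP : ∀ x ∈ P, ∀ y ∈ P, G.dist x y ≤ k) {B : Finset V} (hB : ∀ x ∉ P, x ∈ B) (u v : V) :
    G.dist u v ≤ B.card + k := by
  classical
  obtain ⟨p, hp⟩ := hG.exists_walk_length_eq_dist u v
  have hdist {i : ℕ} (hi : i ∈ Finset.range (p.length + 1)) : G.dist u (p.getVert i) = i :=
    p.dist_getVert_of_length_eq_dist hp (Nat.lt_succ_iff.mp (Finset.mem_range.mp hi))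
  set inP := (Finset.range (p.length + 1)).filter (p.getVert · ∈ P)
  set outP := (Finset.range (p.length + 1)).filter (p.getVert · ∉ P)
  have hsplit : inP.card + outP.card = p.length + 1 := by
    rw [Finset.card_filter_add_card_filter_not, Finset.card_range]
  have hin : inP.card ≤ k + 1 := by
    refine Finset.card_le_of_forall_le_add fun i hi j hj => ?_
    rw [Finset.mem_filter] at hi hj
    calc j = G.dist u (p.getVert j) := (hdist hj.1).symm
      _ ≤ G.dist u (p.getVert i) + G.dist (p.getVert i) (p.getVert j) := hG.dist_triangle
      _ ≤ i + k := by rw [hdist hi.1]; exact Nat.add_le_add_left (hP _ hi.2 _ hj.2) i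
  have hout : outP.card ≤ B.card := by
    refine Finset.card_le_card_of_injOn p.getVert (fun i hi => hB _ ?_) fun i hi j hj hij => ?_
    · exact (Finset.mem_filter.mp hi).2
    · rw [← hdist (Finset.mem_filter.mp hi).1, ← hdist (Finset.mem_filter.mp hj).1, hij]
  omega

end SimpleGraph

section Semigroup

variable {S : Type*} [Semigroup S]

theorem commute_mul_of_mul_mem_center {x s t : S} (hs : x * s ∈ Set.center S)
    (ht : t * x ∈ Set.center S) : Commute x (s * t) :=
  calc x * (s * t) = x * s * t := (mul_assoc x s t).symm
    _ = t * (x * s) := (Semigroup.mem_center_iff.mp hs t).symm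
    _ = t * x * s := (mul_assoc t x s).symm
    _ = s * (t * x) := (Semigroup.mem_center_iff.mp ht s).symm
    _ = s * t * x := (mul_assoc s t x).symm

theorem Subsemigroup.mem_or_exists_mul_eq_of_closure_eq_top {s : Set S}
    (hs : Subsemigroup.closure s = ⊤) (x : S) : x ∈ s ∨ ∃ a b : S, a * b = x := by
  have hx : x ∈ Subsemigroup.closure s := hs ▸ Subsemigroup.mem_top x
  induction hx using Subsemigroup.closure_induction with
  | mem y hy => exact Or.inl hy
  | mul y z _ _ _ _ => exact Or.inr ⟨y, z, rfl⟩

namespace CommutingGraph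

theorem dist_le_one_of_commute {x y : {x : S // x ∉ Set.center S}} (h : Commute (x : S) y) :
    (CommutingGraph S).dist x y ≤ 1 := by
  by_cases hxy : x = y
  · simp [hxy]
  · exact ((CommutingGraph S).dist_eq_one_iff_adj.mpr ⟨hxy, h⟩).le

theorem dist_le_two_of_commute (hconn : (CommutingGraph S).Connected)
    {c x y : {x : S // x ∉ Set.center S}} (hx : Commute (c : S) x) (hy : Commute (c : S) y) :
    (CommutingGraph S).dist x y ≤ 2 :=
  calc (CommutingGraph S).dist x y ≤ (CommutingGraph S).dist x c + (CommutingGraph S).dist c y :=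
        hconn.dist_triangle
    _ ≤ 1 + 1 := Nat.add_le_add (dist_le_one_of_commute hx.symm) (dist_le_one_of_commute hy)

theorem dist_le_two_of_mul_mem_center (hconn : (CommutingGraph S).Connected)
    (c : {x : S // x ∉ Set.center S}) (hc : ∀ s : S, c * s ∈ Set.center S ∧ s * c ∈ Set.center S)
    {x y : {x : S // x ∉ Set.center S}} (hx : ∃ s t : S, s * t = x) (hy : ∃ s t : S, s * t = y) :
    (CommutingGraph S).dist x y ≤ 2 := by
  obtain ⟨s, t, hx⟩ := hx
  obtain ⟨s', t', hy⟩ := hy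
  exact dist_le_two_of_commute hconn (hx ▸ commute_mul_of_mul_mem_center (hc s).1 (hc t).2)
    (hy ▸ commute_mul_of_mul_mem_center (hc s').1 (hc t').2)

end CommutingGraph

end Semigroup

theorem diameter_le_of_ideal_general (S : Type*) [Semigroup S] (d : ℕ)
    (gens : Finset S) (hcard : gens.card = d)
    (hgen : Subsemigroup.closure (gens : Set S) = ⊤)
    (I : Set S)
    (hnc : ¬ I ⊆ Set.center S)
    (hcentral : ∀ x ∈ I, ∀ s : S, x * s ∈ Set.center S ∧ s * x ∈ Set.center S)
    (hconn : (CommutingGraph S).Connected) :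
    ∀ u v, (CommutingGraph S).dist u v ≤ d + 2 := by
  classical
  intro u v
  obtain ⟨a, haI, haZ⟩ := Set.not_subset.mp hnc
  calc (CommutingGraph S).dist u v ≤ (gens.subtype (· ∉ Set.center S)).card + 2 :=
        hconn.dist_le_card_add (P := {x | ∃ s t : S, s * t = x})
          (fun _ hx _ hy => CommutingGraph.dist_le_two_of_mul_mem_center hconn ⟨a, haZ⟩
            (hcentral a haI) hx hy)
          (fun x hx => Finset.mem_subtype.mpr
            ((Subsemigroup.mem_or_exists_mul_eq_of_closure_eq_top hgen x).resolve_right hx)) u v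
    _ ≤ d + 2 := by
        rw [Finset.card_subtype, ← hcard]
        exact Nat.add_le_add_right (Finset.card_filter_le _ _) 2

theorem diameter_le_of_ideal (S : Type*) [Semigroup S] (d : ℕ)
    (gens : Finset S) (hcard : gens.card = d)
    (hgen : Subsemigroup.closure (gens : Set S) = ⊤)
    (I : Set S)
    (hideal : ∀ x ∈ I, ∀ s : S, s * x ∈ I ∧ x * s ∈ I)
    (hnc : ¬ I ⊆ Set.center S)
    (hcentral : ∀ x ∈ I, ∀ s : S, x * s ∈ Set.center S ∧ s * x ∈ Set.center S)
    (hconn : (CommutingGraph S).Connected) :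
    ∀ u v, (CommutingGraph S).dist u v ≤ d + 2 :=
  diameter_le_of_ideal_general S d gens hcard hgen I hnc hcentral hconn
end

section
/- Let S be a finite non-commutative nilpotent semigroup with zero, of nilpotency degree c, generated by d elements. If the commuting graph Γ(S) is connected, then its diameter is at most d + 2. -/
/-- `sPow S m` is the set `S^m = {a₁a₂⋯a_m | aᵢ ∈ S}` (with `S^0 = S^1 = S`). -/
def sPow (S : Type*) [Mul S] : ℕ → Set S
  | 0 => Set.univ
  | 1 => Set.univ
  | n + 2 => Set.image2 (· * ·) (sPow S (n + 1)) Set.univ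


/-!
Let `m` be least with `S^m ⊆ Z(S)` and pick a non-central `h ∈ S^{m-1}`. Then `hy` and `zh` are
central for all `y, z`, so `yzh = (zh)y = z(hy) = h(yz)`: every product commutes with `h`.
Hence the non-central products are pairwise at distance at most 2 in `Γ(S)`, and a geodesic
visits at most three of them. Every other vertex of a geodesic is not a product, hence one of
the `d` generators, so a geodesic has at most `d + 3` vertices.
-/

open Finset

section Semigroup

variable {S : Type*} [Semigroup S]

lemma mul_mem_sPow_succ {n : ℕ} (hn : 1 ≤ n) {x : S} (hx : x ∈ sPow S n) (s : S) :
    x * s ∈ sPow S (n + 1) := by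
  obtain ⟨n, rfl⟩ := Nat.exists_eq_add_of_le' hn
  exact ⟨x, hx, s, trivial, rfl⟩

lemma mul_mem_sPow_succ' :
    ∀ {n : ℕ}, 1 ≤ n → ∀ {x : S}, x ∈ sPow S n → ∀ s : S, s * x ∈ sPow S (n + 1)
  | 1, _, x, _, s => ⟨s, trivial, x, trivial, rfl⟩
  | n + 2, _, _, hx, s => by
    obtain ⟨y, hy, t, -, rfl⟩ := hx
    exact ⟨s * y, mul_mem_sPow_succ' (by omega) hy s, t, trivial, mul_assoc s y t⟩

lemma commute_mul_of_mul_mem_center_s15 {h y z : S} (hy : h * y ∈ Set.center S)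
    (hz : z * h ∈ Set.center S) : Commute (y * z) h :=
  calc y * z * h = y * (z * h) := mul_assoc _ _ _
    _ = z * h * y := Semigroup.mem_center_iff.mp hz y
    _ = z * (h * y) := mul_assoc _ _ _
    _ = h * y * z := Semigroup.mem_center_iff.mp hy z
    _ = h * (y * z) := mul_assoc _ _ _

theorem exists_notMem_center_forall_commute_mul {n : ℕ} (hn : sPow S n ⊆ Set.center S)
    {a : S} (ha : a ∉ Set.center S) :
    ∃ h ∉ Set.center S, ∀ y z : S, Commute (y * z) h := by
  classical
  have hex : ∃ n, sPow S n ⊆ Set.center S := ⟨n, hn⟩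
  obtain ⟨m, hm, hmin⟩ : ∃ m, sPow S m ⊆ Set.center S ∧ ∀ k < m, ¬ sPow S k ⊆ Set.center S :=
    ⟨Nat.find hex, Nat.find_spec hex, fun _ => Nat.find_min hex⟩
  have hm2 : 2 ≤ m := by
    by_contra! hlt
    have huniv : sPow S m = Set.univ := by interval_cases m <;> rfl
    exact ha (hm (huniv ▸ Set.mem_univ a))
  obtain ⟨k, rfl⟩ := Nat.exists_eq_add_of_le' hm2
  obtain ⟨h, hh, hhc⟩ := Set.not_subset.mp (hmin (k + 1) (by omega))
  refine ⟨h, hhc, fun y z => commute_mul_of_mul_mem_center_s15 ?_ ?_⟩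
  · exact hm (mul_mem_sPow_succ (by omega) hh y)
  · exact hm (mul_mem_sPow_succ' (by omega) hh z)

lemma mem_or_exists_mul_eq_of_mem_closure {s : Set S} {x : S}
    (hx : x ∈ Subsemigroup.closure s) : x ∈ s ∨ ∃ a b, a * b = x :=
  Subsemigroup.closure_induction (fun _ h => .inl h) (fun a b _ _ _ _ => .inr ⟨a, b, rfl⟩) hx

lemma CommutingGraph.eq_or_adj_of_commute {x w : {x : S // x ∉ Set.center S}}
    (h : Commute (x : S) w) : x = w ∨ (CommutingGraph S).Adj x w := by
  by_cases hxw : x = w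
  · exact .inl hxw
  · exact .inr ⟨hxw, h⟩

end Semigroup

lemma sPow_subset_center_of_eq_zero {S : Type*} [SemigroupWithZero S] {c : ℕ}
    (hnil : sPow S c = {0}) : sPow S c ⊆ Set.center S :=
  hnil ▸ Set.singleton_subset_iff.mpr Set.zero_mem_center

namespace SimpleGraph

variable {V : Type*} {G : SimpleGraph V}

lemma dist_le_two_of_eq_or_adj {x y w : V} (hx : x = w ∨ G.Adj x w) (hy : y = w ∨ G.Adj y w) :
    G.dist x y ≤ 2 := by
  have hle : ∀ {z}, z = w ∨ G.Adj z w → G.dist z w ≤ 1 := by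
    rintro z (rfl | hz)
    · simp
    · exact (dist_eq_one_iff_adj.mpr hz).le
  have hxw : G.Reachable x w := hx.elim (· ▸ .rfl) Adj.reachable
  calc G.dist x y ≤ G.dist x w + G.dist w y := hxw.dist_triangle_left y
    _ ≤ 1 + 1 := by rw [dist_comm (u := w)]; exact add_le_add (hle hx) (hle hy)

namespace Walk

variable {u v : V} {p : G.Walk u v}

lemma sub_le_dist_getVert (hp : p.length = G.dist u v) {i j : ℕ} (hj : j ≤ p.length) :
    j - i ≤ G.dist (p.getVert i) (p.getVert j) := by
  have hu : G.dist u (p.getVert i) ≤ i :=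
    (dist_le (p.take i)).trans (by rw [take_length]; exact min_le_left _ _)
  have hv : G.dist (p.getVert j) v ≤ p.length - j :=
    (dist_le (p.drop j)).trans_eq (drop_length _ _)
  have hvia_i := (p.take i).reachable.dist_triangle_left v
  have hvia_j := (p.drop j).reachable.dist_triangle_right (p.getVert i)
  omega

lemma card_filter_getVert_mem_le (hp : p.length = G.dist u v) {A : Set V}
    [DecidablePred (· ∈ A)] {k : ℕ} (hA : ∀ x ∈ A, ∀ y ∈ A, G.dist x y ≤ k) :
    #{i ∈ range (p.length + 1) | p.getVert i ∈ A} ≤ k + 1 := by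
  set T := {i ∈ range (p.length + 1) | p.getVert i ∈ A}
  rcases T.eq_empty_or_nonempty with hT | hT
  · simp [hT]
  have hmin := mem_filter.mp (T.min'_mem hT)
  have hsub : T ⊆ Icc (T.min' hT) (T.min' hT + k) := fun j hj => by
    have hj' := mem_filter.mp hj
    have := (p.sub_le_dist_getVert hp (i := T.min' hT) (mem_range_succ_iff.mp hj'.1)).trans
      (hA _ hmin.2 _ hj'.2)
    exact mem_Icc.mpr ⟨T.min'_le j hj, by omega⟩
  exact (card_le_card hsub).trans (by rw [Nat.card_Icc]; omega)

theorem length_le_card_add_of_length_eq_dist (hp : p.length = G.dist u v) {A : Set V}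
    {k : ℕ} (hA : ∀ x ∈ A, ∀ y ∈ A, G.dist x y ≤ k) {B : Finset V} (hB : ∀ x ∉ A, x ∈ B) :
    p.length ≤ #B + k := by
  classical
  have hA' := p.card_filter_getVert_mem_le hp hA
  have hB' : #{i ∈ range (p.length + 1) | p.getVert i ∉ A} ≤ #B := by
    refine card_le_card_of_injOn p.getVert (fun i hi => hB _ (mem_filter.mp hi).2) ?_
    intro i hi j hj
    exact (p.isPath_of_length_eq_dist hp).getVert_injOn
      (mem_range_succ_iff.mp (mem_filter.mp hi).1) (mem_range_succ_iff.mp (mem_filter.mp hj).1)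
  have := card_filter_add_card_filter_not (s := range (p.length + 1)) (fun i => p.getVert i ∈ A)
  simp only [card_range] at this
  omega

end Walk

end SimpleGraph

theorem diameter_le_of_nilpotent_general (S : Type*) [SemigroupWithZero S]
    (c : ℕ) (hnil : sPow S c = {0})
    (d : ℕ) (gens : Finset S) (hcard : gens.card = d)
    (hgen : Subsemigroup.closure (gens : Set S) = ⊤)
    (hconn : (CommutingGraph S).Connected) :
    ∀ u v, (CommutingGraph S).dist u v ≤ d + 2 := by
  classical
  intro u v
  obtain ⟨h, hh, hcomm⟩ := exists_notMem_center_forall_commute_mul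
    (sPow_subset_center_of_eq_zero hnil) u.2
  let products : Set {x : S // x ∉ Set.center S} := {x | ∃ a b, a * b = (x : S)}
  have hnear : ∀ x ∈ products, x = ⟨h, hh⟩ ∨ (CommutingGraph S).Adj x ⟨h, hh⟩ := by
    rintro x ⟨a, b, hab⟩
    exact CommutingGraph.eq_or_adj_of_commute (hab ▸ hcomm a b)
  let gens' := gens.subtype fun x : S => x ∉ Set.center S
  have hcard' : #gens' ≤ d := hcard ▸ (card_subtype _ gens).trans_le (card_filter_le _ _)
  have hgens : ∀ x ∉ products, x ∈ gens' := fun x hx => mem_subtype.mpr <|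
    (mem_or_exists_mul_eq_of_mem_closure (hgen ▸ Subsemigroup.mem_top x.1)).resolve_right hx
  obtain ⟨p, hp⟩ := hconn.exists_walk_length_eq_dist u v
  calc (CommutingGraph S).dist u v = p.length := hp.symm
    _ ≤ #gens' + 2 := p.length_le_card_add_of_length_eq_dist hp
        (fun x hx y hy => SimpleGraph.dist_le_two_of_eq_or_adj (hnear x hx) (hnear y hy)) hgens
    _ ≤ d + 2 := by omega

theorem diameter_le_of_nilpotent (S : Type*) [SemigroupWithZero S] [Finite S]
    (hnoncomm : ∃ a b : S, a * b ≠ b * a)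
    (c : ℕ) (hnil : sPow S c = {0})
    (d : ℕ) (gens : Finset S) (hcard : gens.card = d)
    (hgen : Subsemigroup.closure (gens : Set S) = ⊤)
    (hconn : (CommutingGraph S).Connected) :
    ∀ u v, (CommutingGraph S).dist u v ≤ d + 2 :=
  diameter_le_of_nilpotent_general S c hnil d gens hcard hgen hconn
end

section
/- The semigroup S = ⟨x₁, x₂, x₃, x₄ | xᵢxⱼxₖ = 0 ∀i,j,k; x₁² = x₄x₁; x₄² = x₁x₄; x₁x₂ = x₄x₂ = x₁x₃ = x₄x₃ = x₂x₁ = x₂x₃ = x₃x₂ = x₃x₄ = 0⟩ has commuting graph isomorphic to the path graph on the four vertices x₁ − x₂ − x₃ − x₄, and x₁ − x₂ − x₃ − x₄ is a left path of length 3 in Γ(S). -/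
/-- The free semigroup with zero on the four generators `x₁, x₂, x₃, x₄`. -/
abbrev W4 := WithZero (FreeSemigroup (Fin 4))

/-- The generator `xᵢ` (indexed from `0`, so `xv 0 = x₁`, …, `xv 3 = x₄`). -/
def xv (i : Fin 4) : FreeSemigroup (Fin 4) := FreeSemigroup.of i

/-- The defining relations: `xᵢxⱼxₖ = 0` for all `i,j,k`; `x₁² = x₄x₁`;
`x₄² = x₁x₄`; `x₁x₂ = x₄x₂ = x₁x₃ = x₄x₃ = x₂x₁ = x₂x₃ = x₃x₂ = x₃x₄ = 0`. -/
def KnitRel : W4 → W4 → Prop := fun p q =>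
  (∃ i j k : Fin 4, p = ((xv i * xv j * xv k : FreeSemigroup (Fin 4)) : W4) ∧ q = 0) ∨
  (p = ((xv 0 * xv 0 : FreeSemigroup (Fin 4)) : W4) ∧
    q = ((xv 3 * xv 0 : FreeSemigroup (Fin 4)) : W4)) ∨
  (p = ((xv 3 * xv 3 : FreeSemigroup (Fin 4)) : W4) ∧
    q = ((xv 0 * xv 3 : FreeSemigroup (Fin 4)) : W4)) ∨
  (q = 0 ∧
    (p = ((xv 0 * xv 1 : FreeSemigroup (Fin 4)) : W4) ∨
     p = ((xv 3 * xv 1 : FreeSemigroup (Fin 4)) : W4) ∨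
     p = ((xv 0 * xv 2 : FreeSemigroup (Fin 4)) : W4) ∨
     p = ((xv 3 * xv 2 : FreeSemigroup (Fin 4)) : W4) ∨
     p = ((xv 1 * xv 0 : FreeSemigroup (Fin 4)) : W4) ∨
     p = ((xv 1 * xv 2 : FreeSemigroup (Fin 4)) : W4) ∨
     p = ((xv 2 * xv 1 : FreeSemigroup (Fin 4)) : W4) ∨
     p = ((xv 2 * xv 3 : FreeSemigroup (Fin 4)) : W4)))

/-- The congruence generated by the knit relations. -/
def KnitCon : Con W4 := conGen KnitRel

/-- The knit-degree-3 example semigroup. -/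
def KnitS : Type := KnitCon.Quotient

instance : Semigroup KnitS := Con.semigroup _

/-- The image of the generator `xᵢ` in the semigroup (`e 0 = x₁`, …, `e 3 = x₄`). -/
def e (i : Fin 4) : KnitS := ((xv i : W4) : KnitCon.Quotient)

/-- `a : Fin (m+1) → S` is a left path of length `m`: consecutive entries are
distinct and commute, no entry is central, `a 0 ≠ a m`, and
`a 0 * a i = a m * a i` for all `i`. -/
def IsLeftPath (S : Type*) [Semigroup S] (m : ℕ) (a : Fin (m + 1) → S) : Prop :=
  1 ≤ m ∧
  (∀ i, a i ∉ Set.center S) ∧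
  (∀ i : Fin m, a i.castSucc ≠ a i.succ ∧
    a i.castSucc * a i.succ = a i.succ * a i.castSucc) ∧
  a 0 ≠ a (Fin.last m) ∧
  (∀ i, a 0 * a i = a (Fin.last m) * a i)


/-! Every product of three generators vanishes and the relations identify `x₄x₁` with `x₁²` and
`x₄²` with `x₁x₄`, so `KnitS` has at most the eleven elements `0, x₁, x₂, x₃, x₄, x₁², x₁x₄, x₂²,
x₃², x₂x₄, x₃x₁`. The semigroup `KnitModel` realises exactly this multiplication table, and since
it satisfies the defining relations the eleven elements are distinct, so `KnitS ≃* KnitModel`.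
Both claims are invariant under isomorphism and are finite checks in `KnitModel`. -/

def CommutingGraph.isoOfMulEquiv {S T : Type*} [Semigroup S] [Semigroup T] (φ : S ≃* T) :
    CommutingGraph S ≃g CommutingGraph T where
  toEquiv := φ.toEquiv.subtypeEquiv fun _ => (MulEquivClass.apply_mem_center_iff φ).not.symm
  map_rel_iff' := by simp [CommutingGraph, ← map_mul, Subtype.ext_iff]

lemma MulEquiv.isLeftPath_comp_iff {S T : Type*} [Semigroup S] [Semigroup T] (φ : S ≃* T)
    {m : ℕ} {a : Fin (m + 1) → S} : IsLeftPath T m (φ ∘ a) ↔ IsLeftPath S m a := by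
  simp [IsLeftPath, ← map_mul, MulEquivClass.apply_mem_center_iff]

inductive KnitModel where
  | zero | x₁ | x₂ | x₃ | x₄ | x₁x₁ | x₁x₄ | x₂x₂ | x₃x₃ | x₂x₄ | x₃x₁
  deriving DecidableEq

namespace KnitModel

instance : Fintype KnitModel :=
  ⟨{zero, x₁, x₂, x₃, x₄, x₁x₁, x₁x₄, x₂x₂, x₃x₃, x₂x₄, x₃x₁}, fun t => by cases t <;> decide⟩

def mul : KnitModel → KnitModel → KnitModel
  | x₁, x₁ => x₁x₁
  | x₁, x₄ => x₁x₄
  | x₂, x₂ => x₂x₂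
  | x₂, x₄ => x₂x₄
  | x₃, x₁ => x₃x₁
  | x₃, x₃ => x₃x₃
  | x₄, x₁ => x₁x₁
  | x₄, x₄ => x₁x₄
  | _, _ => zero

instance : SemigroupWithZero KnitModel where
  mul := mul
  mul_assoc := by decide
  zero := zero
  zero_mul := by decide
  mul_zero := by decide

def gen : Fin 4 → KnitModel := ![x₁, x₂, x₃, x₄]

def eval : W4 →ₙ* KnitModel where
  toFun := WithZero.recZeroCoe 0 (FreeSemigroup.lift gen)
  map_mul' a b := by
    induction a <;> induction b
    · exact (zero_mul 0).symm
    · exact (zero_mul _).symm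
    · exact (mul_zero _).symm
    · exact map_mul (FreeSemigroup.lift gen) _ _

lemma knitCon_le_ker_eval : KnitCon ≤ Con.ker eval := by
  refine Con.conGen_le.2 fun a b h => (Con.ker_rel _).2 ?_
  rcases h with ⟨i, j, k, rfl, rfl⟩ | ⟨rfl, rfl⟩ | ⟨rfl, rfl⟩ | ⟨rfl, h⟩
  · revert i j k; decide
  · decide
  · decide
  · rcases h with rfl | rfl | rfl | rfl | rfl | rfl | rfl | rfl <;> decide

lemma gen_not_mem_center : ∀ i, gen i ∉ Set.center KnitModel := by decide

noncomputable def pathGraphIso : SimpleGraph.pathGraph 4 ≃g CommutingGraph KnitModel where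
  toEquiv := Equiv.ofBijective (fun i => ⟨gen i, gen_not_mem_center i⟩) (by decide)
  map_rel_iff' {i j} := by
    change (_ ≠ _ ∧ gen i * gen j = gen j * gen i) ↔ _
    rw [SimpleGraph.pathGraph_adj, Ne, Subtype.ext_iff]
    revert i j
    decide

lemma isLeftPath_gen : IsLeftPath KnitModel 3 gen := by
  unfold IsLeftPath; decide

end KnitModel

namespace KnitS

instance : SemigroupWithZero KnitS where
  zero := ((0 : W4) : KnitCon.Quotient)
  zero_mul x := Con.induction_on x fun w => congrArg ((↑) : W4 → KnitCon.Quotient) (zero_mul w)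
  mul_zero x := Con.induction_on x fun w => congrArg ((↑) : W4 → KnitCon.Quotient) (mul_zero w)

lemma mk_eq_mk_of_knitRel {a b : W4} (h : KnitRel a b) :
    ((a : KnitCon.Quotient) : KnitS) = ((b : KnitCon.Quotient) : KnitS) :=
  (Con.eq KnitCon).2 (ConGen.Rel.of a b h)

lemma e_mul_e_eq_zero {i j : Fin 4} (h : KnitRel ((xv i * xv j : FreeSemigroup (Fin 4)) : W4) 0) :
    e i * e j = 0 :=
  mk_eq_mk_of_knitRel h

lemma e_mul_e_mul_e (i j k : Fin 4) : e i * e j * e k = 0 :=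
  mk_eq_mk_of_knitRel (Or.inl ⟨i, j, k, rfl, rfl⟩)

lemma e_three_mul_e_zero : e 3 * e 0 = e 0 * e 0 :=
  (mk_eq_mk_of_knitRel (by unfold KnitRel; decide)).symm

lemma e_three_mul_e_three : e 3 * e 3 = e 0 * e 3 :=
  mk_eq_mk_of_knitRel (by unfold KnitRel; decide)

def ofModel : KnitModel → KnitS
  | .zero => 0
  | .x₁ => e 0
  | .x₂ => e 1
  | .x₃ => e 2
  | .x₄ => e 3
  | .x₁x₁ => e 0 * e 0
  | .x₁x₄ => e 0 * e 3
  | .x₂x₂ => e 1 * e 1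
  | .x₃x₃ => e 2 * e 2
  | .x₂x₄ => e 1 * e 3
  | .x₃x₁ => e 2 * e 0

lemma ofModel_mul (t u : KnitModel) : ofModel (t * u) = ofModel t * ofModel u := by
  change ofModel (KnitModel.mul t u) = _
  cases t <;> cases u <;>
    simp (disch := unfold KnitRel; decide) only [KnitModel.mul, ofModel, e_mul_e_eq_zero,
      e_mul_e_mul_e, e_three_mul_e_zero, e_three_mul_e_three, zero_mul, mul_zero, ← mul_assoc]

lemma ofModel_gen (i : Fin 4) : ofModel (KnitModel.gen i) = e i := by
  fin_cases i <;> rfl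

lemma ofModel_surjective : Function.Surjective ofModel := by
  intro x
  induction x using Con.induction_on with | H w => ?_
  induction w using WithZero.recZeroCoe with
  | zero => exact ⟨0, rfl⟩
  | coe a =>
    induction a using FreeSemigroup.recOnMul with
    | ih1 i => exact ⟨KnitModel.gen i, ofModel_gen i⟩
    | ih2 i a _ ih =>
      obtain ⟨t, ht⟩ := ih
      exact ⟨KnitModel.gen i * t, by rw [ofModel_mul, ofModel_gen, ht]; rfl⟩

def toModel : KnitS →ₙ* KnitModel where
  toFun x := Con.liftOn x KnitModel.eval fun _ _ h => KnitModel.knitCon_le_ker_eval h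
  map_mul' x y := Con.induction_on₂ x y KnitModel.eval.map_mul

lemma toModel_ofModel (t : KnitModel) : toModel (ofModel t) = t := by
  cases t <;> rfl

def mulEquivModel : KnitS ≃* KnitModel where
  __ := toModel
  invFun := ofModel
  left_inv x := by
    obtain ⟨t, rfl⟩ := ofModel_surjective x
    exact congrArg ofModel (toModel_ofModel t)
  right_inv := toModel_ofModel

end KnitS

theorem knit_commutingGraph_and_leftPath :
    Nonempty (CommutingGraph KnitS ≃g SimpleGraph.pathGraph 4) ∧
    IsLeftPath KnitS 3 ![e 0, e 1, e 2, e 3] := by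
  refine ⟨⟨(CommutingGraph.isoOfMulEquiv KnitS.mulEquivModel).trans
    KnitModel.pathGraphIso.symm⟩, ?_⟩
  rw [← KnitS.mulEquivModel.isLeftPath_comp_iff]
  convert KnitModel.isLeftPath_gen
  ext i
  fin_cases i <;> rfl
end
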